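/- arXiv:1507.03048 — 4 statements merged into one kernel-verified Lean document; each statement's English description precedes it below -/
import Mathlib

section
/- Let A be a complex supersymmetry algebra in dimension n with spinorial representation Σ, non-degenerate equivariant pairing Γ : Σ ⊗ Σ → V_ℂ, and R-symmetry algebra g_R. Suppose Q ∈ Σ is a nonzero supercharge with [Q,Q] = 0, and suppose there exists a Lie algebra homomorphism φ : so(n;ℂ) → g_R such that Q is invariant under the φ-twisted action of so(n;ℂ) on Σ. Then the map [Q,−] : Σ → V_ℂ is surjective (i.e. Q is topological). -/
/-- Let `A` be a complex supersymmetry algebra with spinorial representation `Sp`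
(acted on by the complexified rotations `L = so(n;ℂ)` via a `φ`-twisted action), a non-degenerate
equivariant pairing `Γ : Sp ⊗ Sp → V` into the (irreducible) vector representation `V`, and a
supercharge `Q ≠ 0` with `[Q,Q] = Γ(Q,Q) = 0` which is invariant under the twisted action of `L`.
Then `[Q,−] = Γ(Q,−) : Sp → V` is surjective, i.e. `Q` is topological. -/
theorem supercharge_invariant_is_topological
    {L Sp V : Type*} [LieRing L] [LieAlgebra ℂ L]
    [AddCommGroup Sp] [Module ℂ Sp] [LieRingModule L Sp] [LieModule ℂ L Sp]
    [AddCommGroup V] [Module ℂ V] [LieRingModule L V] [LieModule ℂ L V]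
    -- `V` is an irreducible `L`-representation (the complexified vector representation):
    [IsSimpleOrder (LieSubmodule ℂ L V)]
    (Γ : Sp →ₗ[ℂ] Sp →ₗ[ℂ] V)
    -- `Γ` is equivariant for the (twisted) action of `L`:
    (hequiv : ∀ (x : L) (s t : Sp), ⁅x, Γ s t⁆ = Γ ⁅x, s⁆ t + Γ s ⁅x, t⁆)
    -- non-degeneracy of `Γ`: the map `[s,−]` is nonzero whenever `s ≠ 0`:
    (hnondeg : ∀ s : Sp, s ≠ 0 → Γ s ≠ 0)
    (Q : Sp) (hQ : Q ≠ 0)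
    -- `[Q,Q] = 0`:
    (hQQ : Γ Q Q = 0)
    -- `Q` is invariant under the `φ`-twisted action of `so(n;ℂ)`:
    (hinv : ∀ x : L, ⁅x, Q⁆ = 0) :
    Function.Surjective (Γ Q) := by
  let M : LieSubmodule ℂ L V :=
    { carrier := Set.range (Γ Q)
      add_mem' := by rintro a b ⟨s, rfl⟩ ⟨t, rfl⟩; exact ⟨s + t, by simp⟩
      zero_mem' := ⟨0, by simp⟩
      smul_mem' := by rintro c a ⟨s, rfl⟩; exact ⟨c • s, by simp⟩
      lie_mem := by
        rintro x a ⟨s, rfl⟩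
        refine ⟨⁅x, s⁆, ?_⟩
        have := hequiv x Q s
        rw [hinv x] at this
        simp at this
        simp [this] }
  have hMne : M ≠ ⊥ := by
    intro h
    apply hnondeg Q hQ
    ext s
    have hm : Γ Q s ∈ M := ⟨s, rfl⟩
    rw [h] at hm
    simpa using hm
  have hMtop : M = ⊤ := (IsSimpleOrder.eq_bot_or_eq_top M).resolve_left hMne
  intro v
  have : v ∈ M := hMtop ▸ LieSubmodule.mem_top v
  exact this
end

section
/- Let n = 4 and suppose Q is a nonzero supercharge with [Q,Q] = 0, invariant under a φ-twisted action of ι_i(so(3;ℂ)) ⊂ so(4;ℂ) for i = 1 or 2 (the inclusion of one sl(2;ℂ) factor). Then the image of [Q,−] : Σ → V_ℂ is either a 2-dimensional subspace (Q is holomorphic) or all of V_ℂ (Q is topological). -/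
/-! Because `Q` is invariant and `Γ` is equivariant, `[Q,−] = Γ Q` is a morphism of
`L`-modules, so its range is a Lie submodule, nonzero by non-degeneracy. In the modular
lattice of Lie submodules, `W₂` is an atom and, being a complement of the atom `W₁`, also a
coatom. Hence every Lie submodule is `⊥`, `⊤`, `W₂` or a complement of `W₂`, and the last
two have dimension `4 - 2 = 2`. -/

theorem eq_bot_or_eq_or_eq_top_or_isCompl_of_isAtom_of_isCoatom {α : Type*} [Lattice α]
    [BoundedOrder α] {b : α} (hatom : IsAtom b) (hcoatom : IsCoatom b) (r : α) :
    r = ⊥ ∨ r = b ∨ r = ⊤ ∨ IsCompl r b := by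
  rcases hcoatom.le_iff.mp (le_sup_right : b ≤ r ⊔ b) with hsup | hsup
  · rcases hatom.le_iff.mp (inf_le_right : r ⊓ b ≤ b) with hinf | hinf
    · exact Or.inr (Or.inr (Or.inr (IsCompl.of_eq hinf hsup)))
    · exact Or.inr (Or.inr (Or.inl (sup_eq_left.mpr (inf_eq_right.mp hinf) ▸ hsup)))
  · rcases hatom.le_iff.mp (sup_eq_right.mp hsup) with h | h
    · exact Or.inl h
    · exact Or.inr (Or.inl h)

namespace LinearMap

variable {R L M N P : Type*} [CommRing R] [LieRing L] [LieAlgebra R L]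
  [AddCommGroup M] [Module R M] [LieRingModule L M] [LieModule R L M]
  [AddCommGroup N] [Module R N] [LieRingModule L N] [LieModule R L N]
  [AddCommGroup P] [Module R P] [LieRingModule L P] [LieModule R L P]

def lieModuleHomOfInvariant (Γ : M →ₗ[R] N →ₗ[R] P)
    (hΓ : ∀ (x : L) (m : M) (n : N), ⁅x, Γ m n⁆ = Γ ⁅x, m⁆ n + Γ m ⁅x, n⁆)
    (q : M) (hq : ∀ x : L, ⁅x, q⁆ = 0) : N →ₗ⁅R, L⁆ P where
  toLinearMap := Γ q
  map_lie' {x n} := by simp [hΓ x q n, hq x]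

end LinearMap

theorem LieSubmodule.finrank_add_finrank_of_isCompl {K L V : Type*} [Field K] [LieRing L]
    [LieAlgebra K L] [AddCommGroup V] [Module K V] [LieRingModule L V] [LieModule K L V]
    [FiniteDimensional K V] {U W : LieSubmodule K L V} (h : IsCompl U W) :
    Module.finrank K U + Module.finrank K W = Module.finrank K V :=
  Submodule.finrank_add_eq_of_isCompl (LieSubmodule.isCompl_toSubmodule.mpr h)

theorem LieSubmodule.isAtom_of_finrank_pos {K L V : Type*} [Field K] [LieRing L]
    [LieAlgebra K L] [AddCommGroup V] [Module K V] [LieRingModule L V] [LieModule K L V]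
    {W : LieSubmodule K L V} (hW : 0 < Module.finrank K W)
    (hirr : ∀ U : LieSubmodule K L V, U ≤ W → U = ⊥ ∨ U = W) : IsAtom W :=
  ⟨by rintro rfl; simp [Module.finrank_zero_of_subsingleton] at hW,
    fun U hU => (hirr U hU.le).resolve_right hU.ne⟩

theorem supercharge_holomorphic_or_topological_general
    {L Sp V : Type*} [LieRing L] [LieAlgebra ℂ L]
    [AddCommGroup Sp] [Module ℂ Sp] [LieRingModule L Sp] [LieModule ℂ L Sp]
    [AddCommGroup V] [Module ℂ V] [LieRingModule L V] [LieModule ℂ L V]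
    [FiniteDimensional ℂ V] (hdim : Module.finrank ℂ V = 4)
    (W₁ W₂ : LieSubmodule ℂ L V)
    (hinf : W₁ ⊓ W₂ = ⊥) (hsup : W₁ ⊔ W₂ = ⊤)
    (hW₁ : Module.finrank ℂ W₁ = 2) (hW₂ : Module.finrank ℂ W₂ = 2)
    (hirr₁ : ∀ U : LieSubmodule ℂ L V, U ≤ W₁ → U = ⊥ ∨ U = W₁)
    (hirr₂ : ∀ U : LieSubmodule ℂ L V, U ≤ W₂ → U = ⊥ ∨ U = W₂)
    (Γ : Sp →ₗ[ℂ] Sp →ₗ[ℂ] V)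
    (hequiv : ∀ (x : L) (s t : Sp), ⁅x, Γ s t⁆ = Γ ⁅x, s⁆ t + Γ s ⁅x, t⁆)
    (hnondeg : ∀ s : Sp, s ≠ 0 → Γ s ≠ 0)
    (Q : Sp) (hQ : Q ≠ 0) (hinv : ∀ x : L, ⁅x, Q⁆ = 0) :
    Module.finrank ℂ (LinearMap.range (Γ Q)) = 2 ∨ Function.Surjective (Γ Q) := by
  set f := Γ.lieModuleHomOfInvariant hequiv Q hinv
  have hW₁_atom := LieSubmodule.isAtom_of_finrank_pos (by omega) hirr₁
  have hW₂_atom := LieSubmodule.isAtom_of_finrank_pos (by omega) hirr₂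
  have hW₂_coatom : IsCoatom W₂ := (IsCompl.of_eq hinf hsup).symm.isCoatom_iff_isAtom.mpr hW₁_atom
  have hrange_ne_bot : f.range ≠ ⊥ := fun h =>
    hnondeg Q hQ (LinearMap.range_eq_bot.mp (congrArg LieSubmodule.toSubmodule h))
  rcases eq_bot_or_eq_or_eq_top_or_isCompl_of_isAtom_of_isCoatom hW₂_atom hW₂_coatom f.range
    with h | h | h | h
  · exact absurd h hrange_ne_bot
  · exact Or.inl (h ▸ hW₂ : Module.finrank ℂ f.range = 2)
  · exact Or.inr (f.range_eq_top.mp h)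
  · have hsum := LieSubmodule.finrank_add_finrank_of_isCompl h
    exact Or.inl (by change Module.finrank ℂ f.range = 2; omega)

/-- In dimension 4, `V` is the 4-dimensional vector representation of
`so(4;ℂ)`, which as a module over one `sl(2;ℂ)` factor `L = ι_i(so(3;ℂ))` decomposes as the
direct sum of two 2-dimensional irreducible subrepresentations `W₁, W₂`.  If `Q ≠ 0` is a
supercharge with `[Q,Q] = 0`, invariant under the `φ`-twisted action of `L`, and the pairing
`Γ` is equivariant and non-degenerate, then the image of `[Q,−] = Γ(Q,−) : Σ → V` is either a
2-dimensional subspace (`Q` is holomorphic) or all of `V` (`Q` is topological). -/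
theorem supercharge_holomorphic_or_topological
    {L Sp V : Type*} [LieRing L] [LieAlgebra ℂ L]
    [AddCommGroup Sp] [Module ℂ Sp] [LieRingModule L Sp] [LieModule ℂ L Sp]
    [AddCommGroup V] [Module ℂ V] [LieRingModule L V] [LieModule ℂ L V]
    [FiniteDimensional ℂ V] (hdim : Module.finrank ℂ V = 4)
    (W₁ W₂ : LieSubmodule ℂ L V)
    (hinf : W₁ ⊓ W₂ = ⊥) (hsup : W₁ ⊔ W₂ = ⊤)
    (hW₁ : Module.finrank ℂ W₁ = 2) (hW₂ : Module.finrank ℂ W₂ = 2)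
    (hirr₁ : ∀ U : LieSubmodule ℂ L V, U ≤ W₁ → U = ⊥ ∨ U = W₁)
    (hirr₂ : ∀ U : LieSubmodule ℂ L V, U ≤ W₂ → U = ⊥ ∨ U = W₂)
    (Γ : Sp →ₗ[ℂ] Sp →ₗ[ℂ] V)
    (hequiv : ∀ (x : L) (s t : Sp), ⁅x, Γ s t⁆ = Γ ⁅x, s⁆ t + Γ s ⁅x, t⁆)
    (hnondeg : ∀ s : Sp, s ≠ 0 → Γ s ≠ 0)
    (Q : Sp) (hQ : Q ≠ 0) (hQQ : Γ Q Q = 0) (hinv : ∀ x : L, ⁅x, Q⁆ = 0) :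
    Module.finrank ℂ (LinearMap.range (Γ Q)) = 2 ∨ Function.Surjective (Γ Q) :=
  supercharge_holomorphic_or_topological_general hdim W₁ W₂ hinf hsup hW₁ hW₂ hirr₁ hirr₂ Γ hequiv
    hnondeg Q hQ hinv
end

section
/- In the Q_hol-cohomology of the N=4 supersymmetry algebra: among fermionic elements, the cohomology of [Q_hol,−] on S₊ ⊗ W is the 3-dimensional space spanned by α₂⊗e₂, α₂⊗f₁, α₂⊗f₂ (all elements of S₊⊗W are closed, and the exact elements form the 5-dimensional span of S₊⊗⟨e₁⟩ and ⟨α₁⟩⊗W), while on S₋ ⊗ W* no elements are exact and the closed elements are S₋ ⊗ ⟨e₂*, f₁*, f₂*⟩. -/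
/-! For a matrix unit `Q = E_ij`, `X Q + Q rᵀ` is the `i`-th column of `X` placed in column `j`
plus the `j`-th column of `r` placed in row `i`, so the exact elements are the matrices supported
on row `i` and column `j`. Trace-freeness costs nothing: the `(i, j)` entry can be carried by
`X i i` and the trace of `X` restored by a diagonal entry off column `i`, which `X Q` does not
see. The bracket with `(Q, 0)` kills `S₊ ⊗ W` and sends `b ∈ S₋ ⊗ W*` to `Q bᵀ`, whose only
nonzero row is the `j`-th column of `b`. -/

open Matrix

/-- The bracket on the odd part `Π(S₊⊗W ⊕ S₋⊗W*)` of the complexified `N=4` supersymmetry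
algebra, valued in `V_ℂ ≅ S₊ ⊗ S₋`, in matrix form: the bracket of `(a,b)` and `(a',b')` is
`a ⬝ b'ᵀ + a' ⬝ bᵀ`. -/
noncomputable def n4Bracket :
    (Matrix (Fin 2) (Fin 4) ℂ × Matrix (Fin 2) (Fin 4) ℂ) →ₗ[ℂ]
      (Matrix (Fin 2) (Fin 4) ℂ × Matrix (Fin 2) (Fin 4) ℂ) →ₗ[ℂ]
        Matrix (Fin 2) (Fin 2) ℂ :=
  LinearMap.mk₂ ℂ (fun x y => x.1 * y.2ᵀ + y.1 * x.2ᵀ)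
    (by intro x x' y
        simp [Matrix.add_mul, Matrix.mul_add, Matrix.transpose_add]
        abel)
    (by intro c x y
        simp [Matrix.smul_mul, Matrix.mul_smul, Matrix.transpose_smul, smul_add])
    (by intro x y y'
        simp [Matrix.add_mul, Matrix.mul_add, Matrix.transpose_add]
        abel)
    (by intro c x y
        simp [Matrix.smul_mul, Matrix.mul_smul, Matrix.transpose_smul, smul_add])

/-- `Q_hol = α₁ ⊗ e₁`, as the matrix unit `E₀₀ ∈ S₊ ⊗ W`. -/
noncomputable def qhol : Matrix (Fin 2) (Fin 4) ℂ :=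
  Matrix.single (0 : Fin 2) (0 : Fin 4) (1 : ℂ)

namespace Matrix

variable {m n R : Type*} [DecidableEq m] [DecidableEq n]

theorem mem_span_image_single_one_iff [Fintype m] [Fintype n] [Semiring R] (s : Set (m × n))
    (M : Matrix m n R) :
    M ∈ Submodule.span R ((fun p : m × n => single p.1 p.2 (1 : R)) '' s) ↔
      ∀ p ∉ s, M p.1 p.2 = 0 := by
  constructor
  · intro hM p hp
    induction hM using Submodule.span_induction with
    | mem x hx =>
      obtain ⟨q, hq, rfl⟩ := hx
      exact single_apply_of_ne _ _ _ _ _ fun h => hp (Prod.ext h.1 h.2 ▸ hq)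
    | zero => rfl
    | add x y _ _ hx hy => simp [hx, hy]
    | smul a x _ hx => simp [hx]
  · intro hM
    rw [matrix_eq_sum_single M]
    refine Submodule.sum_mem _ fun i _ => Submodule.sum_mem _ fun j _ => ?_
    by_cases hij : (i, j) ∈ s
    · have hsmul : single i j (M i j) = M i j • single i j 1 := by
        rw [smul_single, smul_eq_mul, mul_one]
      rw [hsmul]
      exact Submodule.smul_mem _ _ (Submodule.subset_span ⟨(i, j), hij, rfl⟩)
    · rw [hM (i, j) hij, single_zero]
      exact Submodule.zero_mem _

theorem single_one_mul_eq_zero_iff [Fintype n] [NonAssocSemiring R] {o : Type*} (i : m) (j : n)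
    (N : Matrix n o R) : single i j (1 : R) * N = 0 ↔ ∀ b, N j b = 0 := by
  constructor
  · intro h b
    simpa using congrFun (congrFun h i) b
  · intro h
    ext a b
    by_cases ha : a = i
    · subst ha
      simp [h]
    · simp [ha]

theorem exists_traceless_mul_single_add_single_mul_transpose_iff [Fintype m] [Fintype n]
    [CommRing R] [Nontrivial m]     (i : m) (j : n) (M : Matrix m n R) :
    (∃ (X : Matrix m m R) (r : Matrix n n R), X.trace = 0 ∧ r.trace = 0 ∧
        M = X * single i j (1 : R) + single i j (1 : R) * rᵀ) ↔
      ∀ k l, k ≠ i → l ≠ j → M k l = 0 := by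
  constructor
  · rintro ⟨X, r, -, -, rfl⟩ k l hk hl
    simp [hk, hl]
  · intro hM
    obtain ⟨k₀, hk₀⟩ := exists_ne i
    refine ⟨M * single j i (1 : R) - single k₀ k₀ (M i j),
      Mᵀ * single i j (1 : R) - single j j (M i j), ?_, ?_, ?_⟩
    · rw [trace_sub, trace_mul_single, trace_single_eq_same]
      simp
    · rw [trace_sub, trace_mul_single, trace_single_eq_same]
      simp
    ext k l
    rcases eq_or_ne k i with rfl | hk <;> rcases eq_or_ne l j with rfl | hl
    · simp [hk₀, transpose_sub, transpose_mul]
    · simp [hl, hl.symm, transpose_sub, transpose_mul]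
    · simp [hk, hk₀, transpose_sub, transpose_mul]
    · simp [hk, hl, hM k l hk hl]

end Matrix

/-- In the `Q_hol`-cohomology of the `N=4` supersymmetry algebra, among fermionic
elements:
(1) every element of `S₊ ⊗ W` is `[Q_hol,−]`-closed;
(2) the exact elements (the image of the bosonic part `so(4;ℂ) ⊕ sl(4;ℂ)` acting on `Q_hol`,
    where `(X₊, X₋) ∈ so(4;ℂ) ≅ sl(2)⊕sl(2)` acts by left multiplication on the `S₊` resp. `S₋`
    index and `r ∈ sl(4;ℂ)` acts on the `W` index by `rᵀ` and on `W*` by `−r`) form exactly the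
    5-dimensional span of `S₊ ⊗ ⟨e₁⟩` and `⟨α₁⟩ ⊗ W` — so the cohomology on `S₊⊗W` is the
    3-dimensional space spanned by `α₂⊗e₂, α₂⊗f₁, α₂⊗f₂`;
(3) on `S₋ ⊗ W*` no elements are exact (the second component of the action on `Q_hol` is zero),
    and the closed elements are exactly `S₋ ⊗ ⟨e₂*, f₁*, f₂*⟩`. -/
theorem qhol_cohomology_fermions :
    (∀ A : Matrix (Fin 2) (Fin 4) ℂ, n4Bracket (qhol, 0) (A, 0) = 0) ∧
    ({ v : Matrix (Fin 2) (Fin 4) ℂ × Matrix (Fin 2) (Fin 4) ℂ |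
        ∃ (Xp Xm : Matrix (Fin 2) (Fin 2) ℂ) (r : Matrix (Fin 4) (Fin 4) ℂ),
          Xp.trace = 0 ∧ Xm.trace = 0 ∧ r.trace = 0 ∧
            v = (Xp * qhol + qhol * rᵀ, Xm * (0 : Matrix (Fin 2) (Fin 4) ℂ) - (0 : Matrix (Fin 2) (Fin 4) ℂ) * r) } =
      { v : Matrix (Fin 2) (Fin 4) ℂ × Matrix (Fin 2) (Fin 4) ℂ |
          v.1 ∈ Submodule.span ℂ
              ({Matrix.single 0 0 1, Matrix.single 1 0 1,
                Matrix.single 0 1 1, Matrix.single 0 2 1,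
                Matrix.single 0 3 1} : Set (Matrix (Fin 2) (Fin 4) ℂ)) ∧
            v.2 = 0 }) ∧
    (∀ b : Matrix (Fin 2) (Fin 4) ℂ,
      n4Bracket (qhol, 0) (0, b) = 0 ↔ ∀ c : Fin 2, b c 0 = 0) := by
  have hgen : ({single 0 0 1, single 1 0 1, single 0 1 1, single 0 2 1, single 0 3 1} :
      Set (Matrix (Fin 2) (Fin 4) ℂ)) =
        (fun p : Fin 2 × Fin 4 => single p.1 p.2 (1 : ℂ)) '' {p | p.1 = 0 ∨ p.2 = 0} := by
    have hcross : {p : Fin 2 × Fin 4 | p.1 = 0 ∨ p.2 = 0} =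
        {(0, 0), (1, 0), (0, 1), (0, 2), (0, 3)} := by
      ext ⟨k, l⟩
      fin_cases k <;> fin_cases l <;> simp
    simp [hcross, Set.image_insert_eq]
  refine ⟨fun A => by simp [n4Bracket], ?_, fun b => by
    simp [n4Bracket, qhol, single_one_mul_eq_zero_iff]⟩
  ext ⟨M, N⟩
  simp only [Set.mem_ofPred_eq, Prod.mk.injEq, Matrix.mul_zero, Matrix.zero_mul, sub_zero, qhol,
    hgen, mem_span_image_single_one_iff, not_or, Prod.forall, and_imp,
    ← exists_traceless_mul_single_add_single_mul_transpose_iff]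
  constructor
  · rintro ⟨Xp, -, r, hXp, -, hr, hM, hN⟩
    exact ⟨⟨Xp, r, hXp, hr, hM⟩, hN⟩
  · rintro ⟨⟨Xp, r, hXp, hr, hM⟩, hN⟩
    exact ⟨Xp, 0, r, hXp, trace_zero _ _, hr, hM, hN⟩
end

section
/- The odd vector fields on the superspace ℂ^{2|3} with coordinates (z₁, z₂, ε, ε₁, ε₂) defined by α₂⊗e₂ ↦ ∂/∂ε, α₂⊗f_i ↦ (−1)^{i+1} ∂/∂ε_i, α_j^∨⊗e₂* ↦ ε ∂/∂z_j, α_j^∨⊗f_i* ↦ (−1)^{i+1} ε_i ∂/∂z_j (i,j ∈ {1,2}) satisfy the commutation relations of the odd part of the Q_hol-twisted N=4 supersymmetry algebra: in particular [α₂⊗e₂, α_j^∨⊗e₂*] = ∂/∂z_j, [α₂⊗f_i, α_j^∨⊗f_i*] = ∂/∂z_j, and all other brackets among these odd vector fields vanish. -/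
/-- Functions on the superspace `ℂ^{2|3}` with coordinates `(z₁, z₂, ε, ε₁, ε₂)`:
a function is recorded by its coefficients (polynomials in `z₁, z₂`) in front of each
monomial `∏_{i ∈ S} ε_i` in the odd coordinates, where the odd index `0` stands for `ε`,
`1` for `ε₁` and `2` for `ε₂`. -/
abbrev SFun := Finset (Fin 3) → MvPolynomial (Fin 2) ℂ

/-- `∂/∂z_j`. -/
noncomputable def pdz (j : Fin 2) (f : SFun) : SFun := fun S => MvPolynomial.pderiv j (f S)

/-- the odd derivation `∂/∂ε_k` (with the Koszul sign). -/
noncomputable def dEps (k : Fin 3) (f : SFun) : SFun := fun S =>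
  if k ∈ S then 0 else ((-1 : ℂ) ^ (S.filter (fun i => i < k)).card) • f (insert k S)

/-- multiplication by `ε_k` (with the Koszul sign). -/
noncomputable def mEps (k : Fin 3) (f : SFun) : SFun := fun S =>
  if k ∈ S then ((-1 : ℂ) ^ ((S.erase k).filter (fun i => i < k)).card) • f (S.erase k) else 0

/-- the bracket of two odd vector fields is the anticommutator. -/
noncomputable def acomm (X Y : SFun → SFun) : SFun → SFun := fun f => X (Y f) + Y (X f)

/-- the sign `(−1)^{i+1}` for `i ∈ {1,2}` (here `i : Fin 2`, `0`-based). -/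
noncomputable def sgn (i : Fin 2) : ℂ := (-1) ^ (i : ℕ)

/-- `α₂ ⊗ e₂ ↦ ∂/∂ε`. -/
noncomputable def vA : SFun → SFun := dEps 0
/-- `α₂ ⊗ f_i ↦ (−1)^{i+1} ∂/∂ε_i`. -/
noncomputable def vB (i : Fin 2) : SFun → SFun := fun f => sgn i • dEps i.succ f
/-- `α_j^∨ ⊗ e₂* ↦ ε ∂/∂z_j`. -/
noncomputable def vE (j : Fin 2) : SFun → SFun := fun f => mEps 0 (pdz j f)
/-- `α_j^∨ ⊗ f_i* ↦ (−1)^{i+1} ε_i ∂/∂z_j`. -/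
noncomputable def vF (i j : Fin 2) : SFun → SFun := fun f => sgn i • mEps i.succ (pdz j f)

namespace Aux

noncomputable def c (k : Fin 3) (S : Finset (Fin 3)) : ℂ :=
  (-1) ^ (S.filter (fun i => i < k)).card

lemma dEps_eq (k : Fin 3) (f : SFun) (S : Finset (Fin 3)) :
    dEps k f S = if k ∈ S then 0 else c k S • f (insert k S) := rfl

lemma mEps_eq (k : Fin 3) (f : SFun) (S : Finset (Fin 3)) :
    mEps k f S = if k ∈ S then c k (S.erase k) • f (S.erase k) else 0 := rfl

lemma c_mul_c (k : Fin 3) (S : Finset (Fin 3)) : c k S * c k S = 1 := by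
  simp [c, ← pow_add, ← two_mul, pow_mul]

lemma c_insert (k a : Fin 3) (S : Finset (Fin 3)) (h : a ∉ S) :
    c k (insert a S) = (if a < k then -1 else 1) * c k S := by
  unfold c
  rw [Finset.filter_insert]
  split
  · rw [Finset.card_insert_of_notMem (fun hm => h (Finset.mem_filter.1 hm).1), pow_succ]
    ring
  · rw [one_mul]

lemma sign_flip {k l : Fin 3} (h : k ≠ l) :
    (if k < l then (-1 : ℂ) else 1) * (if l < k then -1 else 1) = -1 := by
  rcases lt_or_gt_of_ne h with h' | h'
  · simp [h', asymm h']
  · simp [h', asymm h', not_lt_of_gt h']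

lemma dd (k l : Fin 3) (f : SFun) :
    dEps k (dEps l f) + dEps l (dEps k f) = 0 := by
  funext S
  simp only [Pi.add_apply, Pi.zero_apply, dEps_eq]
  by_cases hk : k ∈ S
  · simp [hk, Finset.mem_insert]
  by_cases hl : l ∈ S
  · simp [hl, Finset.mem_insert]
  by_cases hkl : k = l
  · subst hkl; simp
  have h1 : ¬ l ∈ insert k S := by simp [hl, Ne.symm hkl]
  have h2 : ¬ k ∈ insert l S := by simp [hk, hkl]
  rw [if_neg hk, if_neg hl, if_neg h1, if_neg h2, Finset.insert_comm, smul_smul, smul_smul,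
    ← add_smul, c_insert l k S hk, c_insert k l S hl]
  rw [show c k S * ((if k < l then (-1:ℂ) else 1) * c l S)
        + c l S * ((if l < k then (-1:ℂ) else 1) * c k S) = 0 by
    rcases lt_or_gt_of_ne hkl with h' | h' <;>
      simp [h', asymm h', not_lt_of_gt, mul_comm] <;> ring]
  simp

lemma mm (k l : Fin 3) (f : SFun) :
    mEps k (mEps l f) + mEps l (mEps k f) = 0 := by
  funext S
  simp only [Pi.add_apply, Pi.zero_apply, mEps_eq]
  by_cases hk : k ∈ S
  · by_cases hl : l ∈ S
    · by_cases hkl : k = l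
      · subst hkl; simp [Finset.notMem_erase]
      · have hke : k ∈ S.erase l := Finset.mem_erase.2 ⟨hkl, hk⟩
        have hle : l ∈ S.erase k := Finset.mem_erase.2 ⟨Ne.symm hkl, hl⟩
        rw [if_pos hk, if_pos hl, if_pos hke, if_pos hle, smul_smul, smul_smul,
          Finset.erase_right_comm (a := k) (b := l), ← add_smul]
        have hT : S.erase k = insert l ((S.erase l).erase k) := by
          rw [Finset.erase_right_comm]
          exact (Finset.insert_erase hle).symm
        have hT' : S.erase l = insert k ((S.erase l).erase k) := (Finset.insert_erase hke).symm
        have hnk : k ∉ (S.erase l).erase k := Finset.notMem_erase _ _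
        have hnl : l ∉ (S.erase l).erase k :=
          fun h => Finset.notMem_erase _ _ (Finset.mem_of_mem_erase h)
        rw [show c k (S.erase k) = c k (insert l ((S.erase l).erase k)) by rw [← hT],
          show c l (S.erase l) = c l (insert k ((S.erase l).erase k)) by rw [← hT'],
          c_insert k l _ hnl, c_insert l k _ hnk]
        rw [show (if l < k then (-1:ℂ) else 1) * c k ((S.erase l).erase k) * c l ((S.erase l).erase k)
              + (if k < l then (-1:ℂ) else 1) * c l ((S.erase l).erase k) * c k ((S.erase l).erase k) = 0 by
          rcases lt_or_gt_of_ne hkl with h' | h' <;>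
            simp [h', asymm h', not_lt_of_gt] <;> ring]
        simp
    · have : ¬ l ∈ S.erase k := fun h => hl (Finset.mem_of_mem_erase h)
      simp [hk, hl, this]
  · by_cases hl : l ∈ S
    · have : ¬ k ∈ S.erase l := fun h => hk (Finset.mem_of_mem_erase h)
      simp [hk, hl, this]
    · simp [hk, hl]

lemma dm (k l : Fin 3) (f : SFun) :
    dEps k (mEps l f) + mEps l (dEps k f) = if k = l then f else 0 := by
  funext S
  simp only [Pi.add_apply, Pi.zero_apply, dEps_eq, mEps_eq]
  by_cases hkl : k = l
  · subst hkl
    rw [if_pos rfl]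
    by_cases hk : k ∈ S
    · have h2 : k ∉ S.erase k := Finset.notMem_erase _ _
      rw [if_pos hk, if_pos hk, if_neg h2, Finset.insert_erase hk, smul_smul,
        c_mul_c, one_smul, zero_add]
    · have h2 : k ∈ insert k S := Finset.mem_insert_self _ _
      rw [if_neg hk, if_neg hk, if_pos h2, Finset.erase_insert hk, smul_smul, c_mul_c, one_smul,
        add_zero]
  · rw [if_neg hkl]
    by_cases hk : k ∈ S
    · by_cases hl : l ∈ S
      · have hke : k ∈ S.erase l := Finset.mem_erase.2 ⟨hkl, hk⟩
        simp [hk, hl, hke]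
      · simp [hk, hl]
    · by_cases hl : l ∈ S
      · have h1 : l ∈ insert k S := Finset.mem_insert_of_mem hl
        have hke : ¬ k ∈ S.erase l := fun h => hk (Finset.mem_of_mem_erase h)
        have h2 : (insert k S).erase l = insert k (S.erase l) := by
          rw [Finset.erase_insert_of_ne hkl]
        rw [if_neg hk, if_pos h1, if_pos hl, if_neg hke, smul_smul, smul_smul, h2, ← add_smul]
        have hS : S = insert l (S.erase l) := (Finset.insert_erase hl).symm
        have hnl : l ∉ S.erase l := Finset.notMem_erase _ _
        rw [show c k S = c k (insert l (S.erase l)) by rw [← hS],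
          c_insert k l _ hnl, c_insert l k _ hke]
        rw [show (if l < k then (-1:ℂ) else 1) * c k (S.erase l) * ((if k < l then (-1:ℂ) else 1) * c l (S.erase l))
              + c l (S.erase l) * c k (S.erase l) = 0 by
          rcases lt_or_gt_of_ne hkl with h' | h' <;>
            simp [h', asymm h', not_lt_of_gt] <;> ring]
        simp
      · have h1 : ¬ l ∈ insert k S := by simp [hl, Ne.symm hkl]
        simp [hk, hl, h1]


lemma pderiv_comm' (i j : Fin 2) (p : MvPolynomial (Fin 2) ℂ) :
    MvPolynomial.pderiv i (MvPolynomial.pderiv j p)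
      = MvPolynomial.pderiv j (MvPolynomial.pderiv i p) := by
  induction p using MvPolynomial.induction_on with
  | C a => simp
  | add p q hp hq => simp [hp, hq]
  | mul_X p n hp =>
    simp only [MvPolynomial.pderiv_mul, MvPolynomial.pderiv_X, map_add,
      MvPolynomial.pderiv_mul, hp]
    rcases eq_or_ne i n with h | h <;> rcases eq_or_ne j n with h2 | h2 <;>
      simp [h, h2, Pi.single_apply] <;> ring

lemma pdz_pdz (j j' : Fin 2) (f : SFun) : pdz j (pdz j' f) = pdz j' (pdz j f) := by
  funext S; exact pderiv_comm' j j' (f S)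

lemma pdz_smul (j : Fin 2) (a : ℂ) (f : SFun) : pdz j (a • f) = a • pdz j f := by
  funext S; simp [pdz]

lemma dEps_smul (k : Fin 3) (a : ℂ) (f : SFun) : dEps k (a • f) = a • dEps k f := by
  funext S; simp [dEps, smul_comm a]

lemma mEps_smul (k : Fin 3) (a : ℂ) (f : SFun) : mEps k (a • f) = a • mEps k f := by
  funext S; simp [mEps, smul_comm a]

lemma dEps_pdz (k : Fin 3) (j : Fin 2) (f : SFun) : dEps k (pdz j f) = pdz j (dEps k f) := by
  funext S; simp [dEps, pdz]; split <;> simp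

lemma mEps_pdz (k : Fin 3) (j : Fin 2) (f : SFun) : mEps k (pdz j f) = pdz j (mEps k f) := by
  funext S; simp [mEps, pdz]; split <;> simp


lemma sgn_sq (i : Fin 2) : sgn i * sgn i = 1 := by
  fin_cases i <;> norm_num [sgn]

end Aux

open Aux

/-- the odd vector fields on `ℂ^{2|3}` defined above satisfy the commutation
relations of the odd part of the `Q_hol`-twisted `N=4` supersymmetry algebra: in particular
`[α₂⊗e₂, α_j^∨⊗e₂*] = ∂/∂z_j`, `[α₂⊗f_i, α_j^∨⊗f_i*] = ∂/∂z_j`, and all other brackets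
among these odd vector fields vanish. -/
theorem superspace_commutation_relations :
    (∀ (j : Fin 2) (f : SFun), acomm vA (vE j) f = pdz j f) ∧
    (∀ (i j : Fin 2) (f : SFun), acomm (vB i) (vF i j) f = pdz j f) ∧
    (∀ f : SFun, acomm vA vA f = 0) ∧
    (∀ (i i' : Fin 2) (f : SFun), acomm (vB i) (vB i') f = 0) ∧
    (∀ (i : Fin 2) (f : SFun), acomm vA (vB i) f = 0) ∧
    (∀ (i j : Fin 2) (f : SFun), acomm vA (vF i j) f = 0) ∧
    (∀ (i j : Fin 2) (f : SFun), acomm (vB i) (vE j) f = 0) ∧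
    (∀ (i i' j : Fin 2) (f : SFun), i ≠ i' → acomm (vB i) (vF i' j) f = 0) ∧
    (∀ (j j' : Fin 2) (f : SFun), acomm (vE j) (vE j') f = 0) ∧
    (∀ (i j j' : Fin 2) (f : SFun), acomm (vE j) (vF i j') f = 0) ∧
    (∀ (i i' j j' : Fin 2) (f : SFun), acomm (vF i j) (vF i' j') f = 0) := by
  have hsucc : ∀ i : Fin 2, (0 : Fin 3) ≠ i.succ := by decide
  have hsucc2 : ∀ i i' : Fin 2, i ≠ i' → (i.succ : Fin 3) ≠ i'.succ := by decide
  refine ⟨?_, ?_, ?_, ?_, ?_, ?_, ?_, ?_, ?_, ?_, ?_⟩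
  · intro j f
    simp only [acomm, vA, vE, ← dEps_pdz]
    rw [dm]
    simp
  · intro i j f
    simp only [acomm, vB, vF, dEps_smul, mEps_smul, pdz_smul, smul_smul, sgn_sq, one_smul,
      ← dEps_pdz, ← mEps_pdz]
    rw [dm]
    simp
  · intro f
    simp only [acomm, vA]
    exact dd 0 0 f
  · intro i i' f
    simp only [acomm, vB, dEps_smul, smul_smul, mul_comm (sgn i') (sgn i), ← smul_add]
    rw [dd]
    simp
  · intro i f
    simp only [acomm, vA, vB, dEps_smul, ← smul_add]
    rw [dd]
    simp
  · intro i j f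
    simp only [acomm, vA, vF, dEps_smul, mEps_smul, pdz_smul, smul_smul,
      ← dEps_pdz, ← mEps_pdz, ← smul_add]
    rw [dm, if_neg (hsucc i)]
    simp
  · intro i j f
    simp only [acomm, vB, vE, dEps_smul, mEps_smul, pdz_smul,
      ← dEps_pdz, ← mEps_pdz, ← smul_add]
    rw [dm, if_neg (Ne.symm (hsucc i))]
    simp
  · intro i i' j f hii
    simp only [acomm, vB, vF, dEps_smul, mEps_smul, pdz_smul, smul_smul,
      mul_comm (sgn i') (sgn i), ← dEps_pdz, ← mEps_pdz, ← smul_add]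
    rw [dm, if_neg (hsucc2 i i' hii)]
    simp
  · intro j j' f
    simp only [acomm, vE, ← mEps_pdz]
    rw [pdz_pdz j' j, mm]
  · intro i j j' f
    simp only [acomm, vE, vF, mEps_smul, pdz_smul, ← mEps_pdz, ← smul_add]
    rw [pdz_pdz j' j, mm]
    simp
  · intro i i' j j' f
    simp only [acomm, vF, mEps_smul, pdz_smul, smul_smul, mul_comm (sgn i') (sgn i),
      ← mEps_pdz, ← smul_add]
    rw [pdz_pdz j' j, mm]
    simp
end
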